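/- arXiv:2501.07928 — 3 statements merged into one kernel-verified Lean document; each statement's English description precedes it below -/
import Mathlib

section
/- Given a k-extended Langford sequence (s_1, …, s_a) of order a and defect b, the set of triples T_i = {0, s_i + a + b − 1, s_i + i + a + 2(b−1)} for 1 ≤ i ≤ a has multiset of differences equal to ±([b, 3a+b] \ {k + a + b − 1}) in the integers. -/
/-!
Write `T_i = {0, u_i, v_i}` with `u_i = s_i + a + b - 1` and `v_i = s_i + i + a + 2(b - 1)`.
Since `0 < u_i < v_i`, the differences of `T_i` are `±{v_i - u_i, u_i, v_i}`. The gaps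
`v_i - u_i = i + b - 1` run over `[b, a + b - 1]`, while `u_i` and `v_i` are the Langford values
`s_i` and `s_i + i + b - 1` shifted by `a + b - 1`, so together they run over
`[a + b, 3a + b] \ {k + a + b - 1}`.
-/

def tripleDiffs {G : Type*} [AddCommGroup G] [DecidableEq G] (T : Finset G) : Multiset G :=
  ((T ×ˢ T).filter (fun p => p.1 ≠ p.2)).val.map (fun p => p.1 - p.2)

lemma tripleDiffs_insert_zero {G : Type*} [AddCommGroup G] [DecidableEq G] {u v : G}
    (hu : u ≠ 0) (hv : v ≠ 0) (huv : u ≠ v) :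
    tripleDiffs ({0, u, v} : Finset G) =
      ((v - u) ::ₘ u ::ₘ {v}) + ((v - u) ::ₘ u ::ₘ {v}).map Neg.neg := by
  have hval : ({0, u, v} : Finset G).val = 0 ::ₘ u ::ₘ {v} := by
    simp [Finset.insert_val, Multiset.ndinsert_of_notMem, hu.symm, hv.symm, huv]
  rw [tripleDiffs, Finset.filter_val, Finset.product_val, hval]
  simp only [ne_eq, Multiset.product_cons, Multiset.map_cons, Multiset.map_singleton,
    Multiset.cons_product, Multiset.product_singleton, Multiset.singleton_add, Multiset.add_cons,
    Multiset.cons_add, huv, not_false_eq_true, Multiset.filter_cons_of_pos, hv.symm, hu.symm,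
    not_true_eq_false, Multiset.filter_cons_of_neg, huv.symm, hu, hv, Multiset.filter_singleton,
    ↓reduceIte, Multiset.empty_eq_zero, Multiset.cons_zero, zero_sub, sub_zero, neg_sub,
    Multiset.cons_inj_right]
  simp only [← Multiset.singleton_add]
  abel

lemma Int.map_natCast_add_Icc (m n : ℕ) (c : ℤ) :
    (Multiset.Icc m n).map (fun i : ℕ => (i : ℤ) + c) = Multiset.Icc (m + c : ℤ) (n + c) := by
  refine (Multiset.Nodup.ext (Multiset.nodup_Icc.map
    ((add_left_injective c).comp Nat.cast_injective)) Multiset.nodup_Icc).2 fun x => ?_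
  simp only [Multiset.mem_map, Multiset.mem_Icc, Function.comp_apply]
  constructor
  · rintro ⟨i, hi, rfl⟩
    omega
  · intro hx
    lift x - c to ℕ using by omega with i hi
    exact ⟨i, by omega, by omega⟩

lemma Int.Icc_add_Icc_add_one {x y z : ℤ} (hxy : x ≤ y + 1) (hyz : y ≤ z) :
    Multiset.Icc x y + Multiset.Icc (y + 1) z = Multiset.Icc x z := by
  have h := Multiset.Ico_add_Ico_eq_Ico hxy (by omega : y + 1 ≤ z + 1)
  simpa only [Multiset.Ico, Multiset.Icc, Finset.Ico_add_one_right_eq_Icc] using h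

lemma Int.Icc_add_map_erase_Icc {b c n k : ℤ} (hbc : b ≤ c + 1) (hn : 0 ≤ n) (hk : 1 ≤ k) :
    Multiset.Icc b c + ((Multiset.Icc 1 n).erase k).map (· + c) =
      (Multiset.Icc b (n + c)).erase (k + c) := by
  have hkc : k + c ∉ Multiset.Icc b c := by
    rw [Multiset.mem_Icc]; omega
  rw [Multiset.map_erase _ (add_left_injective c), Multiset.map_add_right_Icc,
    ← Multiset.erase_add_right_neg _ hkc, add_comm 1 c,
    Int.Icc_add_Icc_add_one (by omega) (by omega)]

def IsExtendedLangford (a b k : ℕ) (s : ℕ → ℤ) : Prop :=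
  (Multiset.Icc 1 a).map (fun i => s i) + (Multiset.Icc 1 a).map (fun i => s i + i + b - 1) =
    (Multiset.Icc (1 : ℤ) (2 * a + 1)).erase k

namespace IsExtendedLangford

variable {a b k : ℕ} {s : ℕ → ℤ}

lemma one_le (hL : IsExtendedLangford a b k s) {i : ℕ} (hi : i ∈ Multiset.Icc 1 a) :
    1 ≤ s i := by
  have hmem : s i ∈ (Multiset.Icc (1 : ℤ) (2 * a + 1)).erase k := by
    rw [← hL]
    exact Multiset.mem_add.2 (.inl (Multiset.mem_map_of_mem _ hi))
  exact (Multiset.mem_Icc.1 (Multiset.mem_of_mem_erase hmem)).1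

lemma map_add_map_shift (hL : IsExtendedLangford a b k s) :
    (Multiset.Icc 1 a).map (fun i => s i + a + b - 1) +
        (Multiset.Icc 1 a).map (fun i => s i + i + a + 2 * (b - 1)) =
      ((Multiset.Icc (1 : ℤ) (2 * a + 1)).erase k).map (· + ((a : ℤ) + (b - 1))) := by
  rw [← hL, Multiset.map_add, Multiset.map_map, Multiset.map_map]
  congr 1 <;> refine Multiset.map_congr rfl fun i _ => ?_ <;>
    simp only [Function.comp_apply] <;> ring

lemma bind_positiveDiffs (hL : IsExtendedLangford a b k s) (hk : 1 ≤ k) :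
    (Multiset.Icc 1 a).bind (fun i =>
        ((i : ℤ) + (b - 1)) ::ₘ (s i + a + b - 1) ::ₘ {s i + i + a + 2 * (b - 1)}) =
      (Multiset.Icc (b : ℤ) (3 * a + b)).erase (k + a + b - 1) := by
  rw [Multiset.bind_cons, Multiset.bind_cons, Multiset.bind_singleton, Int.map_natCast_add_Icc,
    Nat.cast_one, add_sub_cancel, hL.map_add_map_shift,
    Int.Icc_add_map_erase_Icc (n := 2 * a + 1) (k := k) (by omega) (by omega) (by omega)]
  congr 1
  · congr 1; ring
  · ring

end IsExtendedLangford

theorem stmt_8_general (a b k : ℕ) (hb : 1 ≤ b) (hk : 1 ≤ k)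
    (s : ℕ → ℤ)
    (hLangford : ((Finset.Icc 1 a).val.map (fun i => s i)) +
        ((Finset.Icc 1 a).val.map (fun i => s i + i + b - 1)) =
      ((Finset.Icc (1 : ℤ) (2 * a + 1)).erase (k : ℤ)).val) :
    ((Finset.Icc 1 a).val.bind (fun i =>
        tripleDiffs ({0, s i + a + b - 1, s i + i + a + 2 * (b - 1)} : Finset ℤ))) =
      ((Finset.Icc (b : ℤ) (3 * a + b)).erase ((k : ℤ) + a + b - 1)).val +
      ((Finset.Icc (b : ℤ) (3 * a + b)).erase ((k : ℤ) + a + b - 1)).val.map (fun x => -x) := by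
  have hL : IsExtendedLangford a b k s := hLangford
  have htriple : ∀ i ∈ Multiset.Icc 1 a,
      tripleDiffs ({0, s i + a + b - 1, s i + i + a + 2 * (b - 1)} : Finset ℤ) =
        let D := ((i : ℤ) + (b - 1)) ::ₘ (s i + a + b - 1) ::ₘ {s i + i + a + 2 * (b - 1)}
        D + D.map Neg.neg := fun i hi => by
    have hs := hL.one_le hi
    have hi1 := (Multiset.mem_Icc.1 hi).1
    rw [tripleDiffs_insert_zero (by omega) (by omega) (by omega)]
    rw [show s i + i + a + 2 * (b - 1) - (s i + a + b - 1) = (i : ℤ) + (b - 1) by ring]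
  change (Multiset.Icc 1 a).bind _ =
    (Multiset.Icc _ _).erase _ + ((Multiset.Icc _ _).erase _).map _
  rw [Multiset.bind_congr htriple, Multiset.bind_add, ← Multiset.map_bind,
    hL.bind_positiveDiffs hk]

/-- Given a `k`-extended Langford sequence `(s_1, …, s_a)` of order `a` and defect `b`,
the triples `T_i = {0, s_i + a + b − 1, s_i + i + a + 2(b−1)}` for `1 ≤ i ≤ a` have
multiset of differences `±([b, 3a+b] \ {k + a + b − 1})` in `ℤ`. -/
theorem stmt_8 (a b k : ℕ) (hb : 1 ≤ b) (hk : 1 ≤ k) (hk2 : k ≤ 2 * a + 1)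
    (s : ℕ → ℤ)
    (hLangford : ((Finset.Icc 1 a).val.map (fun i => s i)) +
        ((Finset.Icc 1 a).val.map (fun i => s i + i + b - 1)) =
      ((Finset.Icc (1 : ℤ) (2 * a + 1)).erase (k : ℤ)).val) :
    ((Finset.Icc 1 a).val.bind (fun i =>
        tripleDiffs ({0, s i + a + b - 1, s i + i + a + 2 * (b - 1)} : Finset ℤ))) =
      ((Finset.Icc (b : ℤ) (3 * a + b)).erase ((k : ℤ) + a + b - 1)).val +
      ((Finset.Icc (b : ℤ) (3 * a + b)).erase ((k : ℤ) + a + b - 1)).val.map (fun x => -x) :=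
  stmt_8_general a b k hb hk s hLangford
end

section
/- Let v be a positive integer with v ≡ 2 or 8 (mod 24). Writing v = 2w, there exists a set T of 3-subsets of Z_v such that the multiset of differences ΔT equals Z_v \ {0, w} with each element appearing exactly once. (Existence half of the characterization of (Z_v, Z_2, 3, 1)-difference families.) -/
/-- The multiset of differences of a family of triples. -/
def famDiffs {G : Type*} [AddCommGroup G] [DecidableEq G] (F : Finset (Finset G)) : Multiset G :=
  F.val.bind tripleDiffs

/-! If `{1, …, 3n}` splits into `n` triples `{a, b, a + b}`, then the base blocks `{0, a, a + b}`
in `ℤ/(6n + 2)` have the differences `±a, ±b, ±(a + b)`, so together every one of `±1, …, ±3n`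
exactly once; these are all elements of `ℤ/(6n + 2)` except `0` and `3n + 1`. Such splittings exist
for `n ≡ 0, 1 (mod 4)`, which is exactly `v ≡ 2, 8 (mod 24)`: for `n = 4m, 4m + 1` with `m ≥ 2`
they come from Skolem's sequences (the triple of difference `a` is `(a, x + n, y + n)` for the
Skolem pair `y - x = a`), and the remaining cases `n = 0, 1, 4, 5` are listed by hand. -/

theorem tripleDiffs_zero_pair {G : Type*} [AddCommGroup G] [DecidableEq G] {x y : G}
    (hx : x ≠ 0) (hy : y ≠ 0) (hxy : x ≠ y) :
    tripleDiffs ({0, x, y} : Finset G) = ({x, y - x, y} : Multiset G).bind fun z => {z, -z} := by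
  have hval : ({0, x, y} : Finset G).val = {0, x, y} := by
    simp [Finset.insert_val, Multiset.ndinsert_of_notMem, hx.symm, hy.symm, hxy]
  simp only [tripleDiffs, ne_eq, Finset.filter_val, Finset.product_val, hval,
    Multiset.insert_eq_cons, Multiset.product_cons, Multiset.map_cons, Multiset.map_singleton,
    Multiset.cons_product, Multiset.product_singleton, Multiset.singleton_add, Multiset.add_cons,
    Multiset.cons_add, Multiset.filter_cons_of_pos, Multiset.filter_cons_of_neg,
    Multiset.filter_singleton, hx, hy, hxy, hx.symm, hy.symm, hxy.symm, not_false_eq_true,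
    not_true_eq_false, ↓reduceIte, Multiset.empty_eq_zero, Multiset.cons_zero, zero_sub, sub_zero,
    Multiset.bind_cons, Multiset.bind_singleton, neg_sub]
  simp only [← Multiset.singleton_add]
  abel

namespace Multiset

theorem nodup_of_nodup_bind {α β : Type*} {s : Multiset α} {f : α → Multiset β}
    (h : (s.bind f).Nodup) (hf : ∀ a ∈ s, f a ≠ 0) : s.Nodup := by
  obtain ⟨l, rfl, hl⟩ := (nodup_bind.1 h).2
  refine coe_nodup.2 (hl.imp_of_mem fun ha _ hab heq => hf _ ha ?_)
  subst heq
  exact disjoint_self.1 hab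

theorem count_map_range_add_mul {d : ℕ} (hd : 0 < d) (a L x : ℕ) :
    ((range L).map fun k => a + d * k).count x =
      if a ≤ x ∧ x < a + d * L ∧ d ∣ x - a then 1 else 0 := by
  have hinj : Function.Injective fun k => a + d * k := fun i j h => by
    simpa [hd.ne'] using h
  rw [count_eq_of_nodup ((nodup_range L).map hinj)]
  refine if_congr ⟨?_, ?_⟩ rfl rfl
  · simp only [mem_map, mem_range]
    rintro ⟨k, hk, rfl⟩
    exact ⟨by omega, by nlinarith, by simp⟩
  · rintro ⟨hax, hxL, k, hk⟩
    have : d * k < d * L := by omega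
    exact mem_map.2 ⟨k, mem_range.2 (Nat.lt_of_mul_lt_mul_left this), by omega⟩

theorem count_map_range_sub_mul {d L c : ℕ} (hd : 0 < d) (hL : d * L ≤ c + d) (x : ℕ) :
    ((range L).map fun k => c - d * k).count x =
      if x ≤ c ∧ c < x + d * L ∧ d ∣ c - x then 1 else 0 := by
  have hle : ∀ k ∈ range L, d * k ≤ c := fun k hk => by
    have : d * (k + 1) ≤ d * L := Nat.mul_le_mul_left d (mem_range.1 hk)
    nlinarith
  have hinj : ∀ i ∈ range L, ∀ j ∈ range L, c - d * i = c - d * j → i = j :=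
    fun i hi j hj h => by
      have := hle i hi; have := hle j hj
      exact Nat.eq_of_mul_eq_mul_left hd (by omega)
  rw [count_eq_of_nodup ((nodup_range L).map_on hinj)]
  refine if_congr ⟨?_, ?_⟩ rfl rfl
  · simp only [mem_map]
    rintro ⟨k, hk, rfl⟩
    have h1 := hle k hk
    have h2 : d * k < d * L := Nat.mul_lt_mul_of_pos_left (mem_range.1 hk) hd
    exact ⟨by omega, by omega, ⟨k, by omega⟩⟩
  · rintro ⟨hxc, hcL, k, hk⟩
    have : d * k < d * L := by omega
    exact mem_map.2 ⟨k, mem_range.2 (Nat.lt_of_mul_lt_mul_left this), by omega⟩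

theorem count_map_range_add (a L x : ℕ) :
    ((range L).map fun k => a + k).count x = if a ≤ x ∧ x < a + L then 1 else 0 := by
  simpa using count_map_range_add_mul one_pos a L x

theorem count_map_range_sub {L c : ℕ} (hL : L ≤ c + 1) (x : ℕ) :
    ((range L).map fun k => c - k).count x = if x ≤ c ∧ c < x + L then 1 else 0 := by
  simpa using count_map_range_sub_mul one_pos (by simpa using hL) x

end Multiset

namespace ZMod

theorem natCast_ne_natCast {v a b : ℕ} (ha : a < v) (hb : b < v) (hab : a ≠ b) :
    (a : ZMod v) ≠ b := by
  rwa [Ne, ZMod.natCast_eq_natCast_iff', Nat.mod_eq_of_lt ha, Nat.mod_eq_of_lt hb]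

theorem bind_Icc_natCast_neg {N v : ℕ} [NeZero v] (hv : v = 2 * N + 2) :
    (Multiset.Icc 1 N).bind (fun k => {(k : ZMod v), -(k : ZMod v)}) =
      (Finset.univ \ {0, ((N + 1 : ℕ) : ZMod v)}).val := by
  symm
  refine Multiset.eq_of_le_of_card_le ((Multiset.le_iff_subset (Finset.nodup _)).2 ?_) ?_
  · intro z hz
    simp only [Finset.mem_val, Finset.mem_sdiff, Finset.mem_univ, Finset.mem_insert,
      Finset.mem_singleton, true_and, not_or] at hz
    obtain ⟨hz0, hzN⟩ := hz
    have hzv : z.val < v := ZMod.val_lt z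
    have hz : ((z.val : ℕ) : ZMod v) = z := ZMod.natCast_zmod_val z
    have hval0 : z.val ≠ 0 := fun h => hz0 (by rw [← hz, h, Nat.cast_zero])
    have hvalN : z.val ≠ N + 1 := fun h => hzN (by rw [← hz, h])
    simp only [Multiset.mem_bind, Multiset.mem_Icc, Multiset.insert_eq_cons, Multiset.mem_cons,
      Multiset.mem_singleton]
    rcases Nat.lt_or_gt_of_ne hvalN with hlt | hgt
    · exact ⟨z.val, ⟨by omega, by omega⟩, Or.inl hz.symm⟩
    · refine ⟨v - z.val, ⟨by omega, by omega⟩, Or.inr ?_⟩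
      rw [Nat.cast_sub hzv.le, ZMod.natCast_self, zero_sub, neg_neg, hz]
  · calc Multiset.card ((Multiset.Icc 1 N).bind fun k => {(k : ZMod v), -(k : ZMod v)})
          = 2 * N := by simp [Multiset.Icc, two_mul]
      _ = v - 2 := by omega
      _ ≤ v - ({0, ((N + 1 : ℕ) : ZMod v)} : Finset (ZMod v)).card := by
          have := Finset.card_le_two (a := (0 : ZMod v)) (b := ((N + 1 : ℕ) : ZMod v))
          omega
      _ = (Finset.univ \ {0, ((N + 1 : ℕ) : ZMod v)}).card := by
          rw [Finset.card_sdiff_of_subset (Finset.subset_univ _), Finset.card_univ, ZMod.card]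

end ZMod

def IsSumTriplePartition (n : ℕ) (S : Multiset (ℕ × ℕ × ℕ)) : Prop :=
  (∀ t ∈ S, t.1 + t.2.1 = t.2.2) ∧ S.bind (fun t => {t.1, t.2.1, t.2.2}) = Multiset.Icc 1 (3 * n)

namespace IsSumTriplePartition

variable {n : ℕ} {S : Multiset (ℕ × ℕ × ℕ)}

theorem bounds_of_mem (hS : IsSumTriplePartition n S) {t : ℕ × ℕ × ℕ} (ht : t ∈ S) :
    1 ≤ t.1 ∧ t.1 < t.2.2 ∧ t.2.2 ≤ 3 * n := by
  have hmem : ∀ k ∈ ({t.1, t.2.1, t.2.2} : Multiset ℕ), 1 ≤ k ∧ k ≤ 3 * n := fun k hk =>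
    Multiset.mem_Icc.1 (hS.2 ▸ Multiset.mem_bind.2 ⟨t, ht, hk⟩)
  have h₁ := hmem t.1 (by simp)
  have h₂ := hmem t.2.1 (by simp)
  have h₃ := hmem t.2.2 (by simp)
  have := hS.1 t ht
  omega

theorem exists_famDiffs_eq (hS : IsSumTriplePartition n S) :
    ∃ T : Finset (Finset (ZMod (6 * n + 2))), (∀ t ∈ T, t.card = 3) ∧
      famDiffs T = (Finset.univ \ {0, ((3 * n + 1 : ℕ) : ZMod (6 * n + 2))}).val := by
  let block (t : ℕ × ℕ × ℕ) : Finset (ZMod (6 * n + 2)) := {0, (t.1 : ZMod _), (t.2.2 : ZMod _)}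
  have hdistinct : ∀ t ∈ S, (t.1 : ZMod (6 * n + 2)) ≠ 0 ∧ (t.2.2 : ZMod (6 * n + 2)) ≠ 0 ∧
      (t.1 : ZMod (6 * n + 2)) ≠ t.2.2 := fun t ht => by
    obtain ⟨h₁, h₂, h₃⟩ := hS.bounds_of_mem ht
    refine ⟨?_, ?_, ZMod.natCast_ne_natCast (by omega) (by omega) (by omega)⟩ <;>
      simpa using ZMod.natCast_ne_natCast (v := 6 * n + 2) (b := 0) (by omega) (by omega) (by omega)
  have hdiffs : ∀ t ∈ S, tripleDiffs (block t) =
      ({t.1, t.2.1, t.2.2} : Multiset ℕ).bind fun k => {(k : ZMod (6 * n + 2)), -(k : ZMod _)} := by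
    intro t ht
    obtain ⟨h₁, h₂, h₃⟩ := hdistinct t ht
    have hb : (t.2.2 : ZMod (6 * n + 2)) - t.1 = t.2.1 := by
      rw [← hS.1 t ht, Nat.cast_add, add_sub_cancel_left]
    rw [tripleDiffs_zero_pair h₁ h₂ h₃, hb]
    simp
  have hfam : (S.map block).bind tripleDiffs =
      (Finset.univ \ {0, ((3 * n + 1 : ℕ) : ZMod (6 * n + 2))}).val := by
    rw [Multiset.bind_map, Multiset.bind_congr hdiffs, ← Multiset.bind_assoc, hS.2,
      ZMod.bind_Icc_natCast_neg (by ring)]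
  have hnodup : (S.map block).Nodup := by
    refine Multiset.nodup_of_nodup_bind (hfam ▸ Finset.nodup _) ?_
    rintro _ hb
    obtain ⟨t, ht, rfl⟩ := Multiset.mem_map.1 hb
    simp [hdiffs t ht]
  refine ⟨⟨S.map block, hnodup⟩, fun b hb => ?_, hfam⟩
  obtain ⟨t, ht, rfl⟩ := Multiset.mem_map.1 hb
  obtain ⟨h₁, h₂, h₃⟩ := hdistinct t ht
  exact Finset.card_eq_three.2 ⟨0, _, _, h₁.symm, h₂.symm, h₃, rfl⟩

end IsSumTriplePartition

section Families

open Multiset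

def sumTriplesMod0 (m : ℕ) : Multiset (ℕ × ℕ × ℕ) :=
  (range (2 * m - 1)).map (fun k => (4 + 2 * k, 10 * m - 2 - k, 10 * m + 2 + k)) +
  (range (m - 1)).map (fun k => (4 * m - 3 - 2 * k, 4 * m + 1 + k, 8 * m - 2 - k)) +
  (range (m - 2)).map (fun k => (2 * m - 3 - 2 * k, 5 * m + 2 + k, 7 * m - 1 - k)) +
  {(1, 5 * m, 5 * m + 1), (2, 10 * m - 1, 10 * m + 1), (2 * m - 1, 6 * m, 8 * m - 1),
    (4 * m - 1, 6 * m + 1, 10 * m)}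

set_option maxHeartbeats 400000 in
theorem isSumTriplePartition_sumTriplesMod0 {m : ℕ} (hm : 2 ≤ m) :
    IsSumTriplePartition (4 * m) (sumTriplesMod0 m) := by
  constructor
  · intro t ht
    simp only [sumTriplesMod0, mem_add, mem_map, mem_range, insert_eq_cons, mem_cons,
      mem_singleton] at ht
    rcases ht with (((⟨k, hk, rfl⟩ | ⟨k, hk, rfl⟩) | ⟨k, hk, rfl⟩) | rfl | rfl | rfl | rfl) <;>
      dsimp only <;> omega
  · ext x
    rw [count_eq_of_nodup nodup_Icc]
    simp (disch := omega) only [sumTriplesMod0, insert_eq_cons, bind_cons, bind_singleton,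
      Multiset.map_add, map_map, map_cons, map_singleton, Function.comp_def, count_add, count_cons,
      count_singleton, mem_Icc, count_map_range_add, count_map_range_add_mul two_pos,
      count_map_range_sub, count_map_range_sub_mul two_pos]
    -- Every count is now the indicator of an interval (possibly with a parity condition):
    -- splitting on one indicator at a time and deciding the others by `omega` runs through
    -- the intervals on which all of them are constant.
    repeat' (first | simp (disch := omega) only [if_pos, if_neg] | split)

def sumTriplesMod1 (m : ℕ) : Multiset (ℕ × ℕ × ℕ) :=
  (range (2 * m)).map (fun k => (4 * m - 2 * k, 4 * m + 2 + k, 8 * m + 2 - k)) +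
  (range m).map (fun k => (4 * m - 1 - 2 * k, 8 * m + 3 + k, 12 * m + 2 - k)) +
  (range (m - 2)).map (fun k => (2 * m - 3 - 2 * k, 9 * m + 5 + k, 11 * m + 2 - k)) +
  {(1, 9 * m + 3, 9 * m + 4), (2 * m - 1, 10 * m + 4, 12 * m + 3),
    (4 * m + 1, 6 * m + 2, 10 * m + 3)}

theorem isSumTriplePartition_sumTriplesMod1 {m : ℕ} (hm : 2 ≤ m) :
    IsSumTriplePartition (4 * m + 1) (sumTriplesMod1 m) := by
  constructor
  · intro t ht
    simp only [sumTriplesMod1, mem_add, mem_map, mem_range, insert_eq_cons, mem_cons,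
      mem_singleton] at ht
    rcases ht with (((⟨k, hk, rfl⟩ | ⟨k, hk, rfl⟩) | ⟨k, hk, rfl⟩) | rfl | rfl | rfl) <;>
      dsimp only <;> omega
  · ext x
    rw [count_eq_of_nodup nodup_Icc]
    simp (disch := omega) only [sumTriplesMod1, insert_eq_cons, bind_cons, bind_singleton,
      Multiset.map_add, map_map, map_cons, map_singleton, Function.comp_def, count_add, count_cons,
      count_singleton, mem_Icc, count_map_range_add, count_map_range_sub,
      count_map_range_sub_mul two_pos]
    repeat' (first | simp (disch := omega) only [if_pos, if_neg] | split)

end Families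

theorem exists_isSumTriplePartition {n : ℕ} (hn : n % 4 = 0 ∨ n % 4 = 1) :
    ∃ S, IsSumTriplePartition n S := by
  obtain ⟨m, rfl | rfl⟩ : ∃ m, n = 4 * m ∨ n = 4 * m + 1 := ⟨n / 4, by omega⟩
  · obtain rfl | rfl | hm : m = 0 ∨ m = 1 ∨ 2 ≤ m := by omega
    · exact ⟨0, by constructor <;> decide⟩
    · exact ⟨{(1, 5, 6), (2, 8, 10), (3, 9, 12), (4, 7, 11)}, by constructor <;> decide⟩
    · exact ⟨_, isSumTriplePartition_sumTriplesMod0 hm⟩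
  · obtain rfl | rfl | hm : m = 0 ∨ m = 1 ∨ 2 ≤ m := by omega
    · exact ⟨{(1, 2, 3)}, by constructor <;> decide⟩
    · exact ⟨{(1, 14, 15), (2, 7, 9), (3, 10, 13), (4, 8, 12), (5, 6, 11)},
        by constructor <;> decide⟩
    · exact ⟨_, isSumTriplePartition_sumTriplesMod1 hm⟩

/-- For `v ≡ 2, 8 (mod 24)` there exists a `(Z_v, Z_2, 3, 1)`-difference family:
a set of 3-subsets of `Z_v` whose multiset of differences equals
`Z_v \ {0, v/2}`, each element exactly once. -/
theorem stmt_10 (v : ℕ) [NeZero v] (hv : v % 24 = 2 ∨ v % 24 = 8) :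
    ∃ T : Finset (Finset (ZMod v)), (∀ t ∈ T, t.card = 3) ∧
      famDiffs T = (Finset.univ \ {(0 : ZMod v), ((v / 2 : ℕ) : ZMod v)}).val := by
  obtain ⟨n, rfl⟩ : ∃ n, v = 6 * n + 2 := ⟨v / 6, by omega⟩
  obtain ⟨S, hS⟩ := exists_isSumTriplePartition (n := n) (by omega)
  rw [show (6 * n + 2) / 2 = 3 * n + 1 by omega]
  exact hS.exists_famDiffs_eq
end

section
/- For each odd d ≥ 5 with d ≡ 5 (mod 6), the 2d−3 triples T_i (1 ≤ i ≤ 2d−3) in Z_2^2 × Z_{4d} defined by T_i = {(0,0), (α,i), (γ,2i)} for 1 ≤ i ≤ d−1 and T_i = {(0,0), (α,i+1), (γ,2i+1)} for d ≤ i ≤ 2d−3 (where α, γ are fixed distinct involutions of Z_2^2 with β = α+γ) have multiset of differences equal to ({α} × D_α) ∪ ({β} × D_β) ∪ ({γ} × D_γ), where D_α = Z_{4d} \ ±{0, d, 2d−1, 2d}, D_β = Z_{4d} \ ±{0, 2d−2, 2d−1, 2d}, D_γ = Z_{4d} \ ±{0, 1, 3, 2d}. -/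
section helpers
variable {n : ℕ} [NeZero n]

omit [NeZero n] in
lemma cast_eq_iff' {a b : ℕ} (ha : a < n) (hb : b < n) :
    ((a : ZMod n) = (b : ZMod n)) ↔ a = b := by
  rw [ZMod.natCast_eq_natCast_iff', Nat.mod_eq_of_lt ha, Nat.mod_eq_of_lt hb]

omit [NeZero n] in
lemma cast_eq_neg_iff' {a b : ℕ} (ha : a < n) (hb : 0 < b) (hb' : b < n) :
    ((a : ZMod n) = -(b : ZMod n)) ↔ a + b = n := by
  rw [eq_neg_iff_add_eq_zero, ← Nat.cast_add, ZMod.natCast_eq_zero_iff]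
  constructor
  · intro h
    exact Nat.eq_of_dvd_of_lt_two_mul (by omega) h (by omega)
  · intro h; rw [h]

lemma multiset_eq_val {β : Type*} [DecidableEq β] (M : Multiset β) (hM : M.Nodup) (S : Finset β)
    (h : ∀ x, x ∈ M ↔ x ∈ S) : M = S.val :=
  congrArg Finset.val (Finset.ext (s₁ := ⟨M, hM⟩) h)

lemma key (M : Multiset ℕ) (hM : M.Nodup)
    (h1 : ∀ a ∈ M, 0 < a ∧ a < n)
    (h2 : ∀ a ∈ M, ∀ b ∈ M, a + b ≠ n)
    (S : Finset (ZMod n))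
    (hS : ∀ x : ZMod n, x ∈ S ↔ ∀ a ∈ M, x ≠ (a : ZMod n) ∧ x ≠ -(a : ZMod n)) :
    (M.bind fun a => {(a : ZMod n), -(a : ZMod n)}) = (Finset.univ \ S).val := by
  apply multiset_eq_val
  · rw [Multiset.nodup_bind]
    refine ⟨fun a ha => ?_, Multiset.Nodup.pairwise (fun a ha b hb hab => ?_) hM⟩
    · obtain ⟨h1a, h1a'⟩ := h1 a ha
      simp only [Multiset.insert_eq_cons, Multiset.nodup_cons, Multiset.mem_singleton,
        Multiset.nodup_singleton, and_true]
      rw [cast_eq_neg_iff' h1a' h1a h1a']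
      exact h2 a ha a ha
    · obtain ⟨hb1, hb2⟩ := h1 b hb
      obtain ⟨ha1, ha2⟩ := h1 a ha
      simp only [Function.onFun]
      rw [Multiset.disjoint_left]
      intro x hx
      simp only [Multiset.insert_eq_cons, Multiset.mem_cons, Multiset.mem_singleton] at hx ⊢
      push_neg
      rcases hx with rfl | rfl
      · exact ⟨fun h => hab ((cast_eq_iff' ha2 hb2).mp h),
          fun h => h2 a ha b hb ((cast_eq_neg_iff' ha2 hb1 hb2).mp h)⟩
      · constructor
        · intro h
          rw [eq_comm, cast_eq_neg_iff' hb2 ha1 ha2] at h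
          exact h2 a ha b hb (by omega)
        · intro h
          exact hab ((cast_eq_iff' ha2 hb2).mp (neg_injective h))
  · intro x
    simp only [Multiset.mem_bind, Multiset.insert_eq_cons, Multiset.mem_cons,
      Multiset.mem_singleton, Finset.mem_sdiff, Finset.mem_univ, true_and, hS]
    push_neg
    constructor
    · rintro ⟨a, ha, h⟩; exact ⟨a, ha, by tauto⟩
    · rintro ⟨a, ha, h⟩; exact ⟨a, ha, by tauto⟩

end helpers

lemma tripleDiffs_explicit {G : Type*} [AddCommGroup G] [DecidableEq G] (a b c : G)
    (hab : a ≠ b) (hac : a ≠ c) (hbc : b ≠ c) :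
    tripleDiffs {a, b, c} = {a-b, a-c, b-a, b-c, c-a, c-b} := by
  unfold tripleDiffs
  have h : (({a,b,c} : Finset G) ×ˢ {a,b,c}).filter (fun p => p.1 ≠ p.2) =
      ({(a,b),(a,c),(b,a),(b,c),(c,a),(c,b)} : Finset (G×G)) := by
    ext ⟨x,y⟩
    simp only [Finset.mem_filter, Finset.mem_product, Finset.mem_insert, Finset.mem_singleton,
      Prod.mk.injEq, ne_eq]
    constructor
    · rintro ⟨⟨rfl|rfl|rfl, rfl|rfl|rfl⟩, h⟩ <;> simp_all
    · rintro (⟨rfl,rfl⟩|⟨rfl,rfl⟩|⟨rfl,rfl⟩|⟨rfl,rfl⟩|⟨rfl,rfl⟩|⟨rfl,rfl⟩) <;>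
        simp_all <;> tauto
  rw [h]
  have hval : ({(a,b),(a,c),(b,a),(b,c),(c,a),(c,b)} : Finset (G×G)).val =
      ({(a,b),(a,c),(b,a),(b,c),(c,a),(c,b)} : Multiset (G×G)) := by
    rw [Finset.insert_val, Finset.insert_val, Finset.insert_val, Finset.insert_val,
      Finset.insert_val]
    rw [Multiset.ndinsert_of_notMem, Multiset.ndinsert_of_notMem,
      Multiset.ndinsert_of_notMem, Multiset.ndinsert_of_notMem,
      Multiset.ndinsert_of_notMem] <;>
      simp [Prod.ext_iff] <;> tauto
  rw [hval]
  simp [Multiset.map_cons]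

lemma diffs_i (α γ : ZMod 2 × ZMod 2) (hα : α ≠ 0) (hγ : γ ≠ 0) (hαγ : α ≠ γ)
    {n : ℕ} (x y : ZMod n) :
    tripleDiffs ({((0,0) : (ZMod 2 × ZMod 2) × ZMod n), (α, x), (γ, y)} : Finset _) =
      (({x, -x} : Multiset (ZMod n)).map fun z => (α, z)) +
      (({y - x, x - y} : Multiset (ZMod n)).map fun z => (α + γ, z)) +
      (({y, -y} : Multiset (ZMod n)).map fun z => (γ, z)) := by
  have hneg : ∀ v : ZMod 2 × ZMod 2, -v = v := by decide
  have h1 : ((0,0) : (ZMod 2 × ZMod 2) × ZMod n) ≠ (α, x) := by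
    intro h; exact hα ((Prod.ext_iff.mp h).1).symm
  have h2 : ((0,0) : (ZMod 2 × ZMod 2) × ZMod n) ≠ (γ, y) := by
    intro h; exact hγ ((Prod.ext_iff.mp h).1).symm
  have h3 : ((α, x) : (ZMod 2 × ZMod 2) × ZMod n) ≠ (γ, y) := by
    intro h; exact hαγ ((Prod.ext_iff.mp h).1)
  rw [tripleDiffs_explicit _ _ _ h1 h2 h3]
  have e1 : ((0,0) : (ZMod 2 × ZMod 2) × ZMod n) - (α, x) = (α, -x) := by
    rw [Prod.mk_sub_mk, zero_sub, zero_sub, hneg]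
  have e2 : ((0,0) : (ZMod 2 × ZMod 2) × ZMod n) - (γ, y) = (γ, -y) := by
    rw [Prod.mk_sub_mk, zero_sub, zero_sub, hneg]
  have e3 : ((α, x) : (ZMod 2 × ZMod 2) × ZMod n) - (0,0) = (α, x) := by
    rw [Prod.mk_sub_mk, sub_zero, sub_zero]
  have e4 : ((α, x) : (ZMod 2 × ZMod 2) × ZMod n) - (γ, y) = (α + γ, x - y) := by
    rw [Prod.mk_sub_mk, sub_eq_add_neg α γ, hneg]
  have e5 : ((γ, y) : (ZMod 2 × ZMod 2) × ZMod n) - (0,0) = (γ, y) := by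
    rw [Prod.mk_sub_mk, sub_zero, sub_zero]
  have e6 : ((γ, y) : (ZMod 2 × ZMod 2) × ZMod n) - (α, x) = (α + γ, y - x) := by
    rw [Prod.mk_sub_mk, sub_eq_add_neg γ α, hneg, add_comm]
  rw [e1, e2, e3, e4, e5, e6]
  simp only [Multiset.insert_eq_cons, Multiset.map_cons, Multiset.map_singleton]
  refine Multiset.ext.mpr fun p => ?_
  simp only [Multiset.count_cons, Multiset.count_singleton, Multiset.count_add]
  ring
lemma compA (d : ℕ) (hd : 5 ≤ d) [NeZero (4*d)] (M : Multiset ℕ) (S : Finset (ZMod (4*d)))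
    (hM : ∀ a, a ∈ M ↔ ((1 ≤ a ∧ a ≤ d-1) ∨ (d+1 ≤ a ∧ a ≤ 2*d-2)))
    (hSm : ∀ x : ZMod (4*d), x ∈ S ↔ (x = 0 ∨ x = ((d:ℕ) : ZMod (4*d)) ∨ x = -((d:ℕ) : ZMod (4*d))
      ∨ x = ((2*d-1 : ℕ) : ZMod (4*d)) ∨ x = -((2*d-1 : ℕ) : ZMod (4*d))
      ∨ x = ((2*d : ℕ) : ZMod (4*d)) ∨ x = -((2*d : ℕ) : ZMod (4*d)))) :
    ∀ x : ZMod (4*d), x ∈ S ↔ ∀ a ∈ M, x ≠ (a : ZMod (4*d)) ∧ x ≠ -(a : ZMod (4*d)) := by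
  intro x
  obtain ⟨v, hv, rfl⟩ : ∃ v, v < 4*d ∧ x = ((v:ℕ) : ZMod (4*d)) :=
    ⟨x.val, x.val_lt, (ZMod.natCast_rightInverse x).symm⟩
  rw [hSm]
  rw [show ((v:ℕ) : ZMod (4*d)) = 0 ↔ v = 0 by
      rw [show (0 : ZMod (4*d)) = ((0:ℕ) : ZMod (4*d)) by norm_num, cast_eq_iff' hv (by omega)],
    cast_eq_iff' hv (by omega : d < 4*d),
    cast_eq_neg_iff' hv (by omega) (by omega),
    cast_eq_iff' hv (by omega : 2*d-1 < 4*d),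
    cast_eq_neg_iff' hv (by omega) (by omega),
    cast_eq_iff' hv (by omega : 2*d < 4*d),
    cast_eq_neg_iff' hv (by omega) (by omega)]
  have hcong : (∀ a ∈ M, ((v:ℕ) : ZMod (4*d)) ≠ (a : ZMod (4*d)) ∧ ((v:ℕ) : ZMod (4*d)) ≠ -(a : ZMod (4*d)))
      ↔ (∀ a ∈ M, ¬ v = a ∧ ¬ (v + a = 4*d)) := by
    refine forall₂_congr (fun a ha => ?_)
    have hb : 0 < a ∧ a < 4*d := by have := (hM a).mp ha; omega
    rw [ne_eq, cast_eq_iff' hv hb.2, ne_eq, cast_eq_neg_iff' hv hb.1 hb.2]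
  rw [hcong]
  constructor
  · intro h a ha
    have := (hM a).mp ha
    omega
  · intro h
    by_contra hcon
    push_neg at hcon
    rcases le_or_gt v (2*d-2) with h1 | h1
    · exact (h v ((hM v).mpr (by omega))).1 rfl
    · exact (h (4*d - v) ((hM (4*d-v)).mpr (by omega))).2 (by omega)

lemma compB (d : ℕ) (hd : 5 ≤ d) [NeZero (4*d)] (M : Multiset ℕ) (S : Finset (ZMod (4*d)))
    (hM : ∀ a, a ∈ M ↔ (1 ≤ a ∧ a ≤ 2*d-3))
    (hSm : ∀ x : ZMod (4*d), x ∈ S ↔ (x = 0 ∨ x = ((2*d-2:ℕ) : ZMod (4*d)) ∨ x = -((2*d-2:ℕ) : ZMod (4*d))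
      ∨ x = ((2*d-1 : ℕ) : ZMod (4*d)) ∨ x = -((2*d-1 : ℕ) : ZMod (4*d))
      ∨ x = ((2*d : ℕ) : ZMod (4*d)) ∨ x = -((2*d : ℕ) : ZMod (4*d)))) :
    ∀ x : ZMod (4*d), x ∈ S ↔ ∀ a ∈ M, x ≠ (a : ZMod (4*d)) ∧ x ≠ -(a : ZMod (4*d)) := by
  intro x
  obtain ⟨v, hv, rfl⟩ : ∃ v, v < 4*d ∧ x = ((v:ℕ) : ZMod (4*d)) :=
    ⟨x.val, x.val_lt, (ZMod.natCast_rightInverse x).symm⟩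
  rw [hSm]
  rw [show ((v:ℕ) : ZMod (4*d)) = 0 ↔ v = 0 by
      rw [show (0 : ZMod (4*d)) = ((0:ℕ) : ZMod (4*d)) by norm_num, cast_eq_iff' hv (by omega)],
    cast_eq_iff' hv (by omega : 2*d-2 < 4*d),
    cast_eq_neg_iff' hv (by omega) (by omega),
    cast_eq_iff' hv (by omega : 2*d-1 < 4*d),
    cast_eq_neg_iff' hv (by omega) (by omega),
    cast_eq_iff' hv (by omega : 2*d < 4*d),
    cast_eq_neg_iff' hv (by omega) (by omega)]
  have hcong : (∀ a ∈ M, ((v:ℕ) : ZMod (4*d)) ≠ (a : ZMod (4*d)) ∧ ((v:ℕ) : ZMod (4*d)) ≠ -(a : ZMod (4*d)))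
      ↔ (∀ a ∈ M, ¬ v = a ∧ ¬ (v + a = 4*d)) := by
    refine forall₂_congr (fun a ha => ?_)
    have hb : 0 < a ∧ a < 4*d := by have := (hM a).mp ha; omega
    rw [ne_eq, cast_eq_iff' hv hb.2, ne_eq, cast_eq_neg_iff' hv hb.1 hb.2]
  rw [hcong]
  constructor
  · intro h a ha
    have := (hM a).mp ha
    omega
  · intro h
    by_contra hcon
    push_neg at hcon
    rcases le_or_gt v (2*d-3) with h1 | h1
    · exact (h v ((hM v).mpr (by omega))).1 rfl
    · exact (h (4*d - v) ((hM (4*d-v)).mpr (by omega))).2 (by omega)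

lemma compC (d : ℕ) (hd : 5 ≤ d) [NeZero (4*d)] (M : Multiset ℕ) (S : Finset (ZMod (4*d)))
    (hM : ∀ a, a ∈ M ↔ ((a % 2 = 0 ∧ 2 ≤ a ∧ a ≤ 2*d-2) ∨ (a % 2 = 1 ∧ 2*d+1 ≤ a ∧ a ≤ 4*d-5)))
    (hSm : ∀ x : ZMod (4*d), x ∈ S ↔ (x = 0 ∨ x = ((1:ℕ) : ZMod (4*d)) ∨ x = -((1:ℕ) : ZMod (4*d))
      ∨ x = ((3 : ℕ) : ZMod (4*d)) ∨ x = -((3 : ℕ) : ZMod (4*d))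
      ∨ x = ((2*d : ℕ) : ZMod (4*d)) ∨ x = -((2*d : ℕ) : ZMod (4*d)))) :
    ∀ x : ZMod (4*d), x ∈ S ↔ ∀ a ∈ M, x ≠ (a : ZMod (4*d)) ∧ x ≠ -(a : ZMod (4*d)) := by
  intro x
  obtain ⟨v, hv, rfl⟩ : ∃ v, v < 4*d ∧ x = ((v:ℕ) : ZMod (4*d)) :=
    ⟨x.val, x.val_lt, (ZMod.natCast_rightInverse x).symm⟩
  rw [hSm]
  rw [show ((v:ℕ) : ZMod (4*d)) = 0 ↔ v = 0 by
      rw [show (0 : ZMod (4*d)) = ((0:ℕ) : ZMod (4*d)) by norm_num, cast_eq_iff' hv (by omega)],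
    cast_eq_iff' hv (by omega : 1 < 4*d),
    cast_eq_neg_iff' hv (by omega) (by omega),
    cast_eq_iff' hv (by omega : 3 < 4*d),
    cast_eq_neg_iff' hv (by omega) (by omega),
    cast_eq_iff' hv (by omega : 2*d < 4*d),
    cast_eq_neg_iff' hv (by omega) (by omega)]
  have hcong : (∀ a ∈ M, ((v:ℕ) : ZMod (4*d)) ≠ (a : ZMod (4*d)) ∧ ((v:ℕ) : ZMod (4*d)) ≠ -(a : ZMod (4*d)))
      ↔ (∀ a ∈ M, ¬ v = a ∧ ¬ (v + a = 4*d)) := by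
    refine forall₂_congr (fun a ha => ?_)
    have hb : 0 < a ∧ a < 4*d := by have := (hM a).mp ha; omega
    rw [ne_eq, cast_eq_iff' hv hb.2, ne_eq, cast_eq_neg_iff' hv hb.1 hb.2]
  rw [hcong]
  constructor
  · intro h a ha
    have := (hM a).mp ha
    omega
  · intro h
    by_contra hcon
    push_neg at hcon
    rcases Nat.mod_two_eq_zero_or_one v with he | ho
    · rcases le_or_gt v (2*d-2) with h1 | h1
      · exact (h v ((hM v).mpr (by omega))).1 rfl
      · exact (h (4*d - v) ((hM (4*d-v)).mpr (by omega))).2 (by omega)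
    · rcases le_or_gt v (2*d-1) with h1 | h1
      · exact (h (4*d - v) ((hM (4*d-v)).mpr (by omega))).2 (by omega)
      · exact (h v ((hM v).mpr (by omega))).1 rfl

/-- For odd `d ≡ 5 (mod 6)`, the `2d−3` triples `T_i` in `Z_2^2 × Z_{4d}`, given by
`T_i = {(0,0), (α,i), (γ,2i)}` for `1 ≤ i ≤ d−1` and `T_i = {(0,0), (α,i+1), (γ,2i+1)}`
for `d ≤ i ≤ 2d−3` (with `α, γ` distinct involutions of `Z_2^2` and `β = α + γ`), have
multiset of differences `({α} × D_α) ∪ ({β} × D_β) ∪ ({γ} × D_γ)`, where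
`D_α = Z_{4d} \ ±{0, d, 2d−1, 2d}`, `D_β = Z_{4d} \ ±{0, 2d−2, 2d−1, 2d}`,
`D_γ = Z_{4d} \ ±{0, 1, 3, 2d}`. -/
theorem stmt_12 (d : ℕ) (hd : d % 6 = 5) [NeZero (4 * d)]
    (α γ : ZMod 2 × ZMod 2) (hα : α ≠ 0) (hγ : γ ≠ 0) (hαγ : α ≠ γ) :
    ((Finset.Icc 1 (d - 1)).val.bind (fun i =>
        tripleDiffs ({((0, 0) : (ZMod 2 × ZMod 2) × ZMod (4 * d)),
          (α, (i : ZMod (4 * d))), (γ, ((2 * i : ℕ) : ZMod (4 * d)))} : Finset _))) +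
    ((Finset.Icc d (2 * d - 3)).val.bind (fun i =>
        tripleDiffs ({((0, 0) : (ZMod 2 × ZMod 2) × ZMod (4 * d)),
          (α, ((i + 1 : ℕ) : ZMod (4 * d))), (γ, ((2 * i + 1 : ℕ) : ZMod (4 * d)))} : Finset _))) =
    ((Finset.univ \ ({0, (d : ZMod (4 * d)), -(d : ZMod (4 * d)),
        2 * (d : ZMod (4 * d)) - 1, -(2 * (d : ZMod (4 * d)) - 1),
        2 * (d : ZMod (4 * d)), -(2 * (d : ZMod (4 * d)))} : Finset (ZMod (4 * d)))).val.map
      (fun x => (α, x))) +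
    ((Finset.univ \ ({0, 2 * (d : ZMod (4 * d)) - 2, -(2 * (d : ZMod (4 * d)) - 2),
        2 * (d : ZMod (4 * d)) - 1, -(2 * (d : ZMod (4 * d)) - 1),
        2 * (d : ZMod (4 * d)), -(2 * (d : ZMod (4 * d)))} : Finset (ZMod (4 * d)))).val.map
      (fun x => (α + γ, x))) +
    ((Finset.univ \ ({0, 1, -1, 3, -3,
        2 * (d : ZMod (4 * d)), -(2 * (d : ZMod (4 * d)))} : Finset (ZMod (4 * d)))).val.map
      (fun x => (γ, x))) := by
  have hd5 : 5 ≤ d := by omega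
  -- cast normalizations
  have c1 : ((2*d-1 : ℕ) : ZMod (4*d)) = 2 * ((d:ℕ) : ZMod (4*d)) - 1 := by
    rw [Nat.cast_sub (by omega)]; push_cast; ring
  have c2 : ((2*d : ℕ) : ZMod (4*d)) = 2 * ((d:ℕ) : ZMod (4*d)) := by push_cast; ring
  have c3 : ((2*d-2 : ℕ) : ZMod (4*d)) = 2 * ((d:ℕ) : ZMod (4*d)) - 2 := by
    rw [Nat.cast_sub (by omega)]; push_cast; ring
  have c4 : ((1 : ℕ) : ZMod (4*d)) = (1 : ZMod (4*d)) := by norm_num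
  have c5 : ((3 : ℕ) : ZMod (4*d)) = (3 : ZMod (4*d)) := by norm_num
  -- rewrite each tripleDiffs
  have congr1 : ∀ i ∈ (Finset.Icc 1 (d-1)).val,
      tripleDiffs ({((0, 0) : (ZMod 2 × ZMod 2) × ZMod (4 * d)),
          (α, (i : ZMod (4 * d))), (γ, ((2 * i : ℕ) : ZMod (4 * d)))} : Finset _) =
      ((({(i : ZMod (4*d)), -(i : ZMod (4*d))} : Multiset _).map fun z => (α, z)) +
       (({(i : ZMod (4*d)), -(i : ZMod (4*d))} : Multiset _).map fun z => (α + γ, z))) +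
      (({((2*i : ℕ) : ZMod (4*d)), -((2*i : ℕ) : ZMod (4*d))} : Multiset _).map fun z => (γ, z)) := by
    intro i _
    rw [diffs_i α γ hα hγ hαγ,
      show ((2*i : ℕ) : ZMod (4*d)) - (i : ZMod (4*d)) = (i : ZMod (4*d)) by push_cast; ring,
      show (i : ZMod (4*d)) - ((2*i : ℕ) : ZMod (4*d)) = -(i : ZMod (4*d)) by push_cast; ring]
  have congr2 : ∀ i ∈ (Finset.Icc d (2*d-3)).val,
      tripleDiffs ({((0, 0) : (ZMod 2 × ZMod 2) × ZMod (4 * d)),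
          (α, ((i + 1 : ℕ) : ZMod (4 * d))), (γ, ((2 * i + 1 : ℕ) : ZMod (4 * d)))} : Finset _) =
      ((({((i+1 : ℕ) : ZMod (4*d)), -((i+1 : ℕ) : ZMod (4*d))} : Multiset _).map fun z => (α, z)) +
       (({(i : ZMod (4*d)), -(i : ZMod (4*d))} : Multiset _).map fun z => (α + γ, z))) +
      (({((2*i+1 : ℕ) : ZMod (4*d)), -((2*i+1 : ℕ) : ZMod (4*d))} : Multiset _).map fun z => (γ, z)) := by
    intro i _
    rw [diffs_i α γ hα hγ hαγ,
      show ((2*i+1 : ℕ) : ZMod (4*d)) - ((i+1 : ℕ) : ZMod (4*d)) = (i : ZMod (4*d)) by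
        push_cast; ring,
      show ((i+1 : ℕ) : ZMod (4*d)) - ((2*i+1 : ℕ) : ZMod (4*d)) = -(i : ZMod (4*d)) by
        push_cast; ring]
  rw [Multiset.bind_congr congr1, Multiset.bind_congr congr2,
    Multiset.bind_add, Multiset.bind_add, Multiset.bind_add, Multiset.bind_add,
    ← Multiset.map_bind, ← Multiset.map_bind, ← Multiset.map_bind,
    ← Multiset.map_bind, ← Multiset.map_bind, ← Multiset.map_bind]
  -- component α
  have hA : ((Finset.Icc 1 (d-1)).val.bind fun i =>
        ({(i : ZMod (4*d)), -(i : ZMod (4*d))} : Multiset _)) +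
      ((Finset.Icc d (2*d-3)).val.bind fun i =>
        ({((i+1 : ℕ) : ZMod (4*d)), -((i+1 : ℕ) : ZMod (4*d))} : Multiset _)) =
      (Finset.univ \ ({0, (d : ZMod (4 * d)), -(d : ZMod (4 * d)),
        2 * (d : ZMod (4 * d)) - 1, -(2 * (d : ZMod (4 * d)) - 1),
        2 * (d : ZMod (4 * d)), -(2 * (d : ZMod (4 * d)))} : Finset (ZMod (4 * d)))).val := by
    set MA : Multiset ℕ := (Finset.Icc 1 (d-1)).val +
      (Finset.Icc d (2*d-3)).val.map (fun i => i + 1) with hMAdef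
    have hMA : ∀ a, a ∈ MA ↔ ((1 ≤ a ∧ a ≤ d-1) ∨ (d+1 ≤ a ∧ a ≤ 2*d-2)) := by
      intro a
      simp only [hMAdef, Multiset.mem_add, Multiset.mem_map, Finset.mem_val, Finset.mem_Icc]
      constructor
      · rintro (h | ⟨b, hb, rfl⟩) <;> omega
      · rintro (h | h)
        · exact Or.inl (by omega)
        · exact Or.inr ⟨a-1, by omega, by omega⟩
    have nodupA : MA.Nodup := by
      rw [hMAdef, Multiset.nodup_add]
      refine ⟨(Finset.Icc 1 (d-1)).nodup,
        Multiset.Nodup.map (fun a b h => by omega) (Finset.Icc d (2*d-3)).nodup, ?_⟩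
      rw [Multiset.disjoint_left]
      intro a ha hb
      simp only [Finset.mem_val, Finset.mem_Icc, Multiset.mem_map] at ha hb
      obtain ⟨b, hb1, rfl⟩ := hb
      omega
    have := key (n := 4*d) MA nodupA
      (fun a ha => by have := (hMA a).mp ha; omega)
      (fun a ha b hb => by have := (hMA a).mp ha; have := (hMA b).mp hb; omega)
      ({0, (d : ZMod (4 * d)), -(d : ZMod (4 * d)),
        2 * (d : ZMod (4 * d)) - 1, -(2 * (d : ZMod (4 * d)) - 1),
        2 * (d : ZMod (4 * d)), -(2 * (d : ZMod (4 * d)))} : Finset (ZMod (4 * d)))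
      (compA d hd5 MA _ hMA (fun x => by
        rw [c1, c2]; simp only [Finset.mem_insert, Finset.mem_singleton]))
    rw [hMAdef, Multiset.add_bind, Multiset.bind_map] at this
    exact this
  -- component β
  have hB : ((Finset.Icc 1 (d-1)).val.bind fun i =>
        ({(i : ZMod (4*d)), -(i : ZMod (4*d))} : Multiset _)) +
      ((Finset.Icc d (2*d-3)).val.bind fun i =>
        ({(i : ZMod (4*d)), -(i : ZMod (4*d))} : Multiset _)) =
      (Finset.univ \ ({0, 2 * (d : ZMod (4 * d)) - 2, -(2 * (d : ZMod (4 * d)) - 2),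
        2 * (d : ZMod (4 * d)) - 1, -(2 * (d : ZMod (4 * d)) - 1),
        2 * (d : ZMod (4 * d)), -(2 * (d : ZMod (4 * d)))} : Finset (ZMod (4 * d)))).val := by
    set MB : Multiset ℕ := (Finset.Icc 1 (d-1)).val + (Finset.Icc d (2*d-3)).val with hMBdef
    have hMB : ∀ a, a ∈ MB ↔ (1 ≤ a ∧ a ≤ 2*d-3) := by
      intro a
      simp only [hMBdef, Multiset.mem_add, Finset.mem_val, Finset.mem_Icc]
      omega
    have nodupB : MB.Nodup := by
      rw [hMBdef, Multiset.nodup_add]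
      refine ⟨(Finset.Icc 1 (d-1)).nodup, (Finset.Icc d (2*d-3)).nodup, ?_⟩
      rw [Multiset.disjoint_left]
      intro a ha hb
      simp only [Finset.mem_val, Finset.mem_Icc] at ha hb
      omega
    have := key (n := 4*d) MB nodupB
      (fun a ha => by have := (hMB a).mp ha; omega)
      (fun a ha b hb => by have := (hMB a).mp ha; have := (hMB b).mp hb; omega)
      ({0, 2 * (d : ZMod (4 * d)) - 2, -(2 * (d : ZMod (4 * d)) - 2),
        2 * (d : ZMod (4 * d)) - 1, -(2 * (d : ZMod (4 * d)) - 1),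
        2 * (d : ZMod (4 * d)), -(2 * (d : ZMod (4 * d)))} : Finset (ZMod (4 * d)))
      (compB d hd5 MB _ hMB (fun x => by
        rw [c1, c2, c3]; simp only [Finset.mem_insert, Finset.mem_singleton]))
    rw [hMBdef, Multiset.add_bind] at this
    exact this
  -- component γ
  have hC : ((Finset.Icc 1 (d-1)).val.bind fun i =>
        ({((2*i : ℕ) : ZMod (4*d)), -((2*i : ℕ) : ZMod (4*d))} : Multiset _)) +
      ((Finset.Icc d (2*d-3)).val.bind fun i =>
        ({((2*i+1 : ℕ) : ZMod (4*d)), -((2*i+1 : ℕ) : ZMod (4*d))} : Multiset _)) =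
      (Finset.univ \ ({0, 1, -1, 3, -3,
        2 * (d : ZMod (4 * d)), -(2 * (d : ZMod (4 * d)))} : Finset (ZMod (4 * d)))).val := by
    set MC : Multiset ℕ := (Finset.Icc 1 (d-1)).val.map (fun i => 2*i) +
      (Finset.Icc d (2*d-3)).val.map (fun i => 2*i+1) with hMCdef
    have hMC : ∀ a, a ∈ MC ↔ ((a % 2 = 0 ∧ 2 ≤ a ∧ a ≤ 2*d-2) ∨
        (a % 2 = 1 ∧ 2*d+1 ≤ a ∧ a ≤ 4*d-5)) := by
      intro a
      simp only [hMCdef, Multiset.mem_add, Multiset.mem_map, Finset.mem_val, Finset.mem_Icc]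
      constructor
      · rintro (⟨b, hb, rfl⟩ | ⟨b, hb, rfl⟩) <;> omega
      · rintro (h | h)
        · exact Or.inl ⟨a/2, by omega, by omega⟩
        · exact Or.inr ⟨a/2, by omega, by omega⟩
    have nodupC : MC.Nodup := by
      rw [hMCdef, Multiset.nodup_add]
      refine ⟨Multiset.Nodup.map (fun a b h => by omega) (Finset.Icc 1 (d-1)).nodup,
        Multiset.Nodup.map (fun a b h => by omega) (Finset.Icc d (2*d-3)).nodup, ?_⟩
      rw [Multiset.disjoint_left]
      intro a ha hb
      simp only [Multiset.mem_map, Finset.mem_val, Finset.mem_Icc] at ha hb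
      obtain ⟨b, hb1, rfl⟩ := ha
      obtain ⟨b', hb2, hb3⟩ := hb
      omega
    have := key (n := 4*d) MC nodupC
      (fun a ha => by have := (hMC a).mp ha; omega)
      (fun a ha b hb => by have := (hMC a).mp ha; have := (hMC b).mp hb; omega)
      ({0, 1, -1, 3, -3,
        2 * (d : ZMod (4 * d)), -(2 * (d : ZMod (4 * d)))} : Finset (ZMod (4 * d)))
      (compC d hd5 MC _ hMC (fun x => by
        rw [c2, c4, c5]; simp only [Finset.mem_insert, Finset.mem_singleton]))
    rw [hMCdef, Multiset.add_bind, Multiset.bind_map, Multiset.bind_map] at this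
    exact this
  rw [← hA, ← hB, ← hC, Multiset.map_add, Multiset.map_add, Multiset.map_add]
  abel
end
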